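/- arXiv:1902.03108 — 7 statements merged into one kernel-verified Lean document; each statement's English description precedes it below -/
import Mathlib

section
/- Let p be a partial b-metric on X with coefficient s ≥ 1, T: X → X satisfy p(Tⁿx, Tⁿy) ≤ K p(x,y) for some n > 1 and 0 < K < 1, and let λ > 1 satisfy K^{1/n} < 1/λ < 1. Define p'(x,y) = Σ_{i=0}^{n-1} λⁱ p(Tⁱx, Tⁱy). Then p' is a partial b-metric on X with the same coefficient s. -/
def IsPartialBMetric {X : Type*} (p : X → X → ℝ) (s : ℝ) : Prop :=
  1 ≤ s ∧
  (∀ x y, 0 ≤ p x y) ∧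
  (∀ x y : X, x = y ↔ (p x x = p x y ∧ p x y = p y y)) ∧
  (∀ x y, p x x ≤ p x y) ∧
  (∀ x y, p x y = p y x) ∧
  (∀ x y z, p x y + p z z ≤ s * (p x z + p z y))

open Finset

theorem IsPartialBMetric.sum_comp {X Y ι : Type*} {p : X → X → ℝ} {s : ℝ}
    (hp : IsPartialBMetric p s) {t : Finset ι} {w : ι → ℝ} (hw : ∀ i ∈ t, 0 ≤ w i)
    (f : ι → Y → X) {i₀ : ι} (hi₀ : i₀ ∈ t) (hw₀ : 0 < w i₀) (hf₀ : Function.Injective (f i₀)) :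
    IsPartialBMetric (fun x y => ∑ i ∈ t, w i * p (f i x) (f i y)) s := by
  obtain ⟨hs, hnonneg, heq_iff, hself_le, hsymm, htri⟩ := hp
  have eq_of_sum_eq {a b : ι → ℝ} (hab : ∀ i ∈ t, a i ≤ b i)
      (h : ∑ i ∈ t, w i * a i = ∑ i ∈ t, w i * b i) : a i₀ = b i₀ :=
    mul_left_cancel₀ hw₀.ne' <| (sum_eq_sum_iff_of_le fun i hi =>
      mul_le_mul_of_nonneg_left (hab i hi) (hw i hi)).1 h i₀ hi₀
  refine ⟨hs, fun x y => sum_nonneg fun i hi => mul_nonneg (hw i hi) (hnonneg _ _),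
    fun x y => ⟨by rintro rfl; exact ⟨rfl, rfl⟩, fun ⟨h₁, h₂⟩ => hf₀ ((heq_iff _ _).2 ⟨?_, ?_⟩)⟩,
    fun x y => sum_le_sum fun i hi => mul_le_mul_of_nonneg_left (hself_le _ _) (hw i hi),
    fun x y => sum_congr rfl fun i _ => by rw [hsymm], fun x y z => ?_⟩
  · exact eq_of_sum_eq (a := fun i => p (f i x) (f i x)) (b := fun i => p (f i x) (f i y))
      (fun i _ => hself_le _ _) h₁
  · refine (eq_of_sum_eq (a := fun i => p (f i y) (f i y))
    (b := fun i => p (f i x) (f i y)) (fun i _ => ?_) h₂.symm).symm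
    exact hsymm (f i x) (f i y) ▸ hself_le _ _
  · rw [← sum_add_distrib, ← sum_add_distrib, mul_sum]
    gcongr with i hi
    linear_combination mul_le_mul_of_nonneg_left (htri (f i x) (f i y) (f i z)) (hw i hi)

theorem stmt_2_general {X : Type*} (p : X → X → ℝ) (s : ℝ)
    (hp : IsPartialBMetric p s) (T : X → X)
    (n : ℕ) (hn : 1 < n)
    (lam : ℝ) (hlampos : 1 < lam) :
    IsPartialBMetric (fun x y => ∑ i ∈ Finset.range n, lam ^ i * p (T^[i] x) (T^[i] y)) s :=
  hp.sum_comp (fun i _ => by positivity) (fun i => T^[i]) (i₀ := 0) (mem_range.2 (by omega))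
    (by rw [pow_zero]; exact one_pos) Function.injective_id

theorem stmt_2 {X : Type*} (p : X → X → ℝ) (s : ℝ)
    (hp : IsPartialBMetric p s) (T : X → X)
    (n : ℕ) (hn : 1 < n) (K : ℝ) (hK0 : 0 < K) (hK1 : K < 1)
    (hT : ∀ x y, p (T^[n] x) (T^[n] y) ≤ K * p x y)
    (lam : ℝ) (hlam : K ^ ((1 : ℝ) / n) < 1 / lam) (hlam1 : 1 / lam < 1) (hlampos : 1 < lam) :
    IsPartialBMetric (fun x y => ∑ i ∈ Finset.range n, lam ^ i * p (T^[i] x) (T^[i] y)) s :=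
  stmt_2_general p s hp T n hn lam hlampos
end

section
/- Let p be a partial b-metric on X with coefficient s ≥ 1, T: X → X satisfy p(Tⁿx, Tⁿy) ≤ K p(x,y) for some n > 1 and 0 < K < 1, and let λ > 1 satisfy K^{1/n} < 1/λ. Define p'(x,y) = Σ_{i=0}^{n-1} λⁱ p(Tⁱx, Tⁱy). Then T is a contraction with constant 1/λ with respect to p', i.e. p'(Tx,Ty) ≤ (1/λ) p'(x,y) for all x,y ∈ X. -/
open Finset

lemma pow_mul_lt_one_of_rpow_inv_lt {K lam : ℝ} {n : ℕ} (hK : 0 ≤ K) (hn : n ≠ 0)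
    (hlam : K ^ ((1 : ℝ) / n) < 1 / lam) : lam ^ n * K < 1 := by
  have hlam0 : 0 < lam := one_div_pos.mp ((Real.rpow_nonneg hK _).trans_lt hlam)
  rw [one_div (n : ℝ)] at hlam
  calc lam ^ n * K = lam ^ n * (K ^ (n⁻¹ : ℝ)) ^ n := by rw [Real.rpow_inv_natCast_pow hK hn]
    _ < lam ^ n * (1 / lam) ^ n := by gcongr
    _ = 1 := by rw [← mul_pow, mul_one_div_cancel hlam0.ne', one_pow]

section WeightedOrbitSum

variable {X : Type*} (p : X → X → ℝ) (T : X → X) (lam : ℝ) (n : ℕ)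

/-- The paper's `p'`. -/
def weightedOrbitSum (x y : X) : ℝ :=
  ∑ i ∈ range n, lam ^ i * p (T^[i] x) (T^[i] y)

lemma mul_weightedOrbitSum_apply_add (x y : X) :
    lam * weightedOrbitSum p T lam n (T x) (T y) + p x y =
      weightedOrbitSum p T lam n x y + lam ^ n * p (T^[n] x) (T^[n] y) := by
  have hshift := sum_range_succ' (fun i ↦ lam ^ i * p (T^[i] x) (T^[i] y)) n
  rw [sum_range_succ] at hshift
  simp only [Function.iterate_succ_apply, pow_succ', mul_assoc, ← mul_sum, pow_zero,
    one_mul, Function.iterate_zero_apply] at hshift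
  simp only [weightedOrbitSum]
  linarith

lemma weightedOrbitSum_apply_le (hlam : 0 < lam)
    (hTn : ∀ x y, lam ^ n * p (T^[n] x) (T^[n] y) ≤ p x y) (x y : X) :
    weightedOrbitSum p T lam n (T x) (T y) ≤ (1 / lam) * weightedOrbitSum p T lam n x y := by
  rw [one_div_mul_eq_div, le_div_iff₀' hlam]
  linarith [mul_weightedOrbitSum_apply_add p T lam n x y, hTn x y]

end WeightedOrbitSum

theorem stmt_3_general {X : Type*} (p : X → X → ℝ) (s : ℝ)
    (hp : IsPartialBMetric p s) (T : X → X)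
    (n : ℕ) (hn : 1 < n) (K : ℝ) (hK0 : 0 < K)
    (hT : ∀ x y, p (T^[n] x) (T^[n] y) ≤ K * p x y)
    (lam : ℝ) (hlampos : 1 < lam) (hlam : K ^ ((1 : ℝ) / n) < 1 / lam) :
    ∀ x y : X,
      (∑ i ∈ Finset.range n, lam ^ i * p (T^[i] (T x)) (T^[i] (T y))) ≤
        (1 / lam) * ∑ i ∈ Finset.range n, lam ^ i * p (T^[i] x) (T^[i] y) := by
  have hnonneg : ∀ x y, 0 ≤ p x y := hp.2.1
  have hlamK : lam ^ n * K < 1 := pow_mul_lt_one_of_rpow_inv_lt hK0.le (by omega) hlam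
  have hlam0 : 0 < lam := zero_lt_one.trans hlampos
  refine weightedOrbitSum_apply_le p T lam n hlam0 fun x y ↦ ?_
  calc lam ^ n * p (T^[n] x) (T^[n] y) ≤ lam ^ n * (K * p x y) := by gcongr; exact hT x y
    _ = (lam ^ n * K) * p x y := by ring
    _ ≤ p x y := mul_le_of_le_one_left (hnonneg x y) hlamK.le

theorem stmt_3 {X : Type*} (p : X → X → ℝ) (s : ℝ)
    (hp : IsPartialBMetric p s) (T : X → X)
    (n : ℕ) (hn : 1 < n) (K : ℝ) (hK0 : 0 < K) (hK1 : K < 1)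
    (hT : ∀ x y, p (T^[n] x) (T^[n] y) ≤ K * p x y)
    (lam : ℝ) (hlampos : 1 < lam) (hlam : K ^ ((1 : ℝ) / n) < 1 / lam) :
    ∀ x y : X,
      (∑ i ∈ Finset.range n, lam ^ i * p (T^[i] (T x)) (T^[i] (T y))) ≤
        (1 / lam) * ∑ i ∈ Finset.range n, lam ^ i * p (T^[i] x) (T^[i] y) :=
  stmt_3_general p s hp T n hn K hK0 hT lam hlampos hlam
end

section
/- Under the hypotheses that p'(x,y) = Σ_{i=0}^{n-1} λⁱ p(Tⁱx, Tⁱy) where p(Tⁿx,Tⁿy) ≤ K p(x,y) with λⁿK < 1, the infinite series h(x,y) = Σ_{i=0}^{∞} λⁱ p(Tⁱx, Tⁱy) converges and satisfies p'(x,y) ≤ h(x,y) ≤ (1/(1−λⁿK)) p'(x,y) for all x,y ∈ X. -/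
open Finset

section ShiftContraction

variable {f : ℕ → ℝ} {n : ℕ} {r : ℝ}

theorem sum_range_le_of_le_mul_shift (hf : ∀ i, 0 ≤ f i) (hr0 : 0 ≤ r) (hr1 : r < 1)
    (hshift : ∀ i, f (n + i) ≤ r * f i) (m : ℕ) :
    ∑ i ∈ range m, f i ≤ 1 / (1 - r) * ∑ i ∈ range n, f i := by
  have hmono : ∑ i ∈ range m, f i ≤ ∑ i ∈ range (n + m), f i :=
    sum_le_sum_of_subset_of_nonneg (range_subset_range.2 (Nat.le_add_left m n))
      fun i _ _ => hf i
  have hsplit : ∑ i ∈ range (n + m), f i ≤ ∑ i ∈ range n, f i + r * ∑ i ∈ range (n + m), f i :=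
    calc ∑ i ∈ range (n + m), f i = ∑ i ∈ range n, f i + ∑ i ∈ range m, f (n + i) :=
          sum_range_add f n m
      _ ≤ ∑ i ∈ range n, f i + ∑ i ∈ range m, r * f i := by gcongr with i; exact hshift i
      _ = ∑ i ∈ range n, f i + r * ∑ i ∈ range m, f i := by rw [mul_sum]
      _ ≤ ∑ i ∈ range n, f i + r * ∑ i ∈ range (n + m), f i := by gcongr
  have hbound : ∑ i ∈ range (n + m), f i ≤ 1 / (1 - r) * ∑ i ∈ range n, f i := by
    rw [one_div_mul_eq_div, le_div_iff₀ (sub_pos.2 hr1)]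
    linarith
  exact hmono.trans hbound

theorem summable_of_le_mul_shift (hf : ∀ i, 0 ≤ f i) (hr0 : 0 ≤ r) (hr1 : r < 1)
    (hshift : ∀ i, f (n + i) ≤ r * f i) : Summable f :=
  summable_of_sum_range_le hf (sum_range_le_of_le_mul_shift hf hr0 hr1 hshift)

theorem tsum_le_of_le_mul_shift (hf : ∀ i, 0 ≤ f i) (hr0 : 0 ≤ r) (hr1 : r < 1)
    (hshift : ∀ i, f (n + i) ≤ r * f i) :
    ∑' i, f i ≤ 1 / (1 - r) * ∑ i ∈ range n, f i :=
  Real.tsum_le_of_sum_range_le hf (sum_range_le_of_le_mul_shift hf hr0 hr1 hshift)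

end ShiftContraction

theorem weighted_orbit_dist_shift_le {X : Type*} {p : X → X → ℝ} {T : X → X} {n : ℕ} {K lam : ℝ}
    (hT : ∀ x y, p (T^[n] x) (T^[n] y) ≤ K * p x y) (hlam : 0 ≤ lam) (x y : X) (i : ℕ) :
    lam ^ (n + i) * p (T^[n + i] x) (T^[n + i] y) ≤
      lam ^ n * K * (lam ^ i * p (T^[i] x) (T^[i] y)) :=
  calc lam ^ (n + i) * p (T^[n + i] x) (T^[n + i] y)
      = lam ^ (n + i) * p (T^[n] (T^[i] x)) (T^[n] (T^[i] y)) := by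
        rw [Function.iterate_add_apply, Function.iterate_add_apply]
    _ ≤ lam ^ (n + i) * (K * p (T^[i] x) (T^[i] y)) := by gcongr; exact hT _ _
    _ = lam ^ n * K * (lam ^ i * p (T^[i] x) (T^[i] y)) := by ring

theorem stmt_4_general {X : Type*} (p : X → X → ℝ) (s : ℝ)
    (hp : IsPartialBMetric p s) (T : X → X)
    (n : ℕ) (K : ℝ) (hK0 : 0 < K)
    (hT : ∀ x y, p (T^[n] x) (T^[n] y) ≤ K * p x y)
    (lam : ℝ) (hlampos : 1 < lam) (hlamK : lam ^ n * K < 1) :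
    ∀ x y : X,
      Summable (fun i : ℕ => lam ^ i * p (T^[i] x) (T^[i] y)) ∧
      (∑ i ∈ Finset.range n, lam ^ i * p (T^[i] x) (T^[i] y)) ≤
        (∑' i : ℕ, lam ^ i * p (T^[i] x) (T^[i] y)) ∧
      (∑' i : ℕ, lam ^ i * p (T^[i] x) (T^[i] y)) ≤
        (1 / (1 - lam ^ n * K)) * ∑ i ∈ Finset.range n, lam ^ i * p (T^[i] x) (T^[i] y) := by
  intro x y
  have hlam : 0 ≤ lam := zero_le_one.trans hlampos.le
  have hf : ∀ i, 0 ≤ lam ^ i * p (T^[i] x) (T^[i] y) :=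
    fun i => mul_nonneg (pow_nonneg hlam i) (hp.2.1 _ _)
  have hr0 : 0 ≤ lam ^ n * K := mul_nonneg (pow_nonneg hlam n) hK0.le
  have hshift := weighted_orbit_dist_shift_le hT hlam x y
  have hsum := summable_of_le_mul_shift hf hr0 hlamK hshift
  exact ⟨hsum, hsum.sum_le_tsum _ fun i _ => hf i, tsum_le_of_le_mul_shift hf hr0 hlamK hshift⟩

theorem stmt_4 {X : Type*} (p : X → X → ℝ) (s : ℝ)
    (hp : IsPartialBMetric p s) (T : X → X)
    (n : ℕ) (hn : 1 < n) (K : ℝ) (hK0 : 0 < K) (hK1 : K < 1)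
    (hT : ∀ x y, p (T^[n] x) (T^[n] y) ≤ K * p x y)
    (lam : ℝ) (hlampos : 1 < lam) (hlamK : lam ^ n * K < 1) :
    ∀ x y : X,
      Summable (fun i : ℕ => lam ^ i * p (T^[i] x) (T^[i] y)) ∧
      (∑ i ∈ Finset.range n, lam ^ i * p (T^[i] x) (T^[i] y)) ≤
        (∑' i : ℕ, lam ^ i * p (T^[i] x) (T^[i] y)) ∧
      (∑' i : ℕ, lam ^ i * p (T^[i] x) (T^[i] y)) ≤
        (1 / (1 - lam ^ n * K)) * ∑ i ∈ Finset.range n, lam ^ i * p (T^[i] x) (T^[i] y) :=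
  stmt_4_general p s hp T n K hK0 hT lam hlampos hlamK
end

section
/- Let p be a partial b-metric on X, T: X → X satisfy p(Tⁿx,Tⁿy) ≤ K p(x,y) for some n > 1, 0 < K < 1, with λ > 1 chosen so K^{1/n} < 1/λ, and let p'(x,y) = Σ_{i=0}^{n-1} λⁱ p(Tⁱx,Tⁱy). If T is uniformly continuous on (X,p) and (X,p) is 0-complete, then (X,p') is 0-complete. -/
/-- `(X,p)` is `0`-complete. -/
def ZeroComplete {X : Type*} (p : X → X → ℝ) : Prop :=
  ∀ x : ℕ → X,
    Filter.Tendsto (fun nm : ℕ × ℕ => p (x nm.1) (x nm.2)) Filter.atTop (nhds 0) →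
    ∃ a : X, Filter.Tendsto (fun n => p (x n) a) Filter.atTop (nhds 0) ∧ p a a = 0

/-- Uniform continuity of `T : (X,p₁) → (Y,p₂)`. -/
def PUniformContinuous {X Y : Type*} (p₁ : X → X → ℝ) (p₂ : Y → Y → ℝ) (T : X → Y) : Prop :=
  ∀ ε > (0 : ℝ), ∃ δ > (0 : ℝ), ∀ x y : X, p₁ x y < δ → p₂ (T x) (T y) < ε

/-! Since `p'` dominates its `i = 0` term `p`, a `p'`-Cauchy sequence `xₘ` is `p`-Cauchy and has
a `p`-limit `a`. Uniform continuity of the iterates carries `p (xₘ, a) → 0` to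
`p (Tⁱ xₘ, Tⁱ a) → 0` for every `i`, hence `p' (xₘ, a) → 0`; and `p (Tⁱ a, Tⁱ a) ≤ p (Tⁱ xₘ, Tⁱ a)`
then forces `p' (a, a) = 0`. -/

open Filter Topology

namespace PUniformContinuous

variable {X Y Z : Type*}

protected theorem id (p : X → X → ℝ) : PUniformContinuous p p _root_.id :=
  fun ε hε => ⟨ε, hε, fun _ _ h => h⟩

theorem comp {p₁ : X → X → ℝ} {p₂ : Y → Y → ℝ} {p₃ : Z → Z → ℝ} {g : Y → Z} {f : X → Y}
    (hg : PUniformContinuous p₂ p₃ g) (hf : PUniformContinuous p₁ p₂ f) :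
    PUniformContinuous p₁ p₃ (g ∘ f) := by
  intro ε hε
  obtain ⟨η, hη, hgη⟩ := hg ε hε
  obtain ⟨δ, hδ, hfδ⟩ := hf η hη
  exact ⟨δ, hδ, fun x y h => hgη _ _ (hfδ x y h)⟩

theorem iterate {p : X → X → ℝ} {T : X → X} (hT : PUniformContinuous p p T) :
    ∀ i : ℕ, PUniformContinuous p p T^[i]
  | 0 => PUniformContinuous.id p
  | i + 1 => by rw [Function.iterate_succ']; exact hT.comp (hT.iterate i)

theorem tendsto_zero {p₁ : X → X → ℝ} {p₂ : Y → Y → ℝ} {f : X → Y}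
    (hf : PUniformContinuous p₁ p₂ f) (hp₂ : ∀ x y, 0 ≤ p₂ x y)
    {ι : Type*} {l : Filter ι} {x y : ι → X}
    (h : Tendsto (fun i => p₁ (x i) (y i)) l (𝓝 0)) :
    Tendsto (fun i => p₂ (f (x i)) (f (y i))) l (𝓝 0) := by
  rw [Metric.tendsto_nhds] at h ⊢
  intro ε hε
  obtain ⟨δ, hδ, hfδ⟩ := hf ε hε
  filter_upwards [h δ hδ] with i hi
  rw [Real.dist_0_eq_abs, abs_of_nonneg (hp₂ _ _)]
  exact hfδ _ _ ((le_abs_self _).trans_lt (Real.dist_0_eq_abs _ ▸ hi))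

end PUniformContinuous

theorem IsPartialBMetric.self_eq_zero_of_tendsto {X : Type*} {p : X → X → ℝ} {s : ℝ}
    (hp : IsPartialBMetric p s) {ι : Type*} {l : Filter ι} [l.NeBot] {x : ι → X} {a : X}
    (h : Tendsto (fun i => p (x i) a) l (𝓝 0)) : p a a = 0 := by
  obtain ⟨-, hnn, -, hself, hsym, -⟩ := hp
  refine le_antisymm (ge_of_tendsto h (Eventually.of_forall fun i => ?_)) (hnn a a)
  exact (hself a (x i)).trans_eq (hsym a (x i))

theorem stmt_5_general {X : Type*} (p : X → X → ℝ) (s : ℝ)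
    (hp : IsPartialBMetric p s) (T : X → X)
    (n : ℕ) (hn : 1 < n)
    (lam : ℝ) (hlampos : 1 < lam)
    (hunif : PUniformContinuous p p T) (hcomp : ZeroComplete p) :
    ZeroComplete (fun x y => ∑ i ∈ Finset.range n, lam ^ i * p (T^[i] x) (T^[i] y)) := by
  have hnn := hp.2.1
  have hlam : 0 ≤ lam := by linarith
  have hdom : ∀ u v, p u v ≤ ∑ i ∈ Finset.range n, lam ^ i * p (T^[i] u) (T^[i] v) :=
    fun u v => by
      simpa using Finset.single_le_sum (f := fun i => lam ^ i * p (T^[i] u) (T^[i] v))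
        (fun i _ => mul_nonneg (pow_nonneg hlam i) (hnn _ _))
        (Finset.mem_range.2 (by omega : 0 < n))
  intro x hx
  obtain ⟨a, ha, -⟩ := hcomp x (squeeze_zero (fun _ => hnn _ _) (fun _ => hdom _ _) hx)
  have hiter : ∀ i, Tendsto (fun m => p (T^[i] (x m)) (T^[i] a)) atTop (𝓝 0) :=
    fun i => (hunif.iterate i).tendsto_zero hnn (y := fun _ => a) ha
  refine ⟨a, ?_, ?_⟩
  · simpa using tendsto_finsetSum (Finset.range n) fun i _ => (hiter i).const_mul (lam ^ i)
  · exact Finset.sum_eq_zero fun i _ => by rw [hp.self_eq_zero_of_tendsto (hiter i), mul_zero]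

theorem stmt_5 {X : Type*} (p : X → X → ℝ) (s : ℝ)
    (hp : IsPartialBMetric p s) (T : X → X)
    (n : ℕ) (hn : 1 < n) (K : ℝ) (hK0 : 0 < K) (hK1 : K < 1)
    (hT : ∀ x y, p (T^[n] x) (T^[n] y) ≤ K * p x y)
    (lam : ℝ) (hlampos : 1 < lam) (hlam : K ^ ((1 : ℝ) / n) < 1 / lam)
    (hunif : PUniformContinuous p p T) (hcomp : ZeroComplete p) :
    ZeroComplete (fun x y => ∑ i ∈ Finset.range n, lam ^ i * p (T^[i] x) (T^[i] y)) :=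
  stmt_5_general p s hp T n hn lam hlampos hunif hcomp
end

section
/- Let (X,p) be a partial b-metric space with coefficient s ≥ 1, T: X → X, and (xₙ) a sequence with xₙ₊₁ = Txₙ satisfying p(xₙ, xₙ₊₁) ≤ λ p(xₙ₋₁, xₙ) for all n, where λ ∈ [0,1). Then (xₙ) is a 0-Cauchy sequence, i.e. lim_{n,m→∞} p(xₙ,xₘ) = 0. -/
open Filter

namespace IsPartialBMetric

variable {X : Type*} {p : X → X → ℝ} {s : ℝ}

theorem one_le (hp : IsPartialBMetric p s) : 1 ≤ s := hp.1

theorem nonneg (hp : IsPartialBMetric p s) (x y : X) : 0 ≤ p x y := hp.2.1 x y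

theorem self_le (hp : IsPartialBMetric p s) (x y : X) : p x x ≤ p x y := hp.2.2.2.1 x y

theorem symm (hp : IsPartialBMetric p s) (x y : X) : p x y = p y x := hp.2.2.2.2.1 x y

theorem le_mul_add (hp : IsPartialBMetric p s) (x y z : X) : p x y ≤ s * (p x z + p z y) := by
  linarith [hp.2.2.2.2.2 x y z, hp.nonneg z z]

variable {x : ℕ → X} {lam c : ℝ}

theorem le_pow_mul_two_mul_pow (hp : IsPartialBMetric p s) (hl0 : 0 ≤ lam) (hl1 : lam ≤ 1)
    (hx : ∀ n, p (x n) (x (n + 1)) ≤ lam ^ n * c) (n t : ℕ) :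
    p (x n) (x (n + t)) ≤ lam ^ n * ((2 * s) ^ t * c) := by
  induction t generalizing n with
  | zero => simpa using (hp.self_le _ _).trans (hx n)
  | succ t ih =>
    have hs := hp.one_le
    have hc : 0 ≤ c := by simpa using (hp.nonneg _ _).trans (hx 0)
    have hst : 1 ≤ (2 * s) ^ t := one_le_pow₀ (by linarith)
    calc p (x n) (x (n + (t + 1)))
        ≤ s * (p (x n) (x (n + 1)) + p (x (n + 1)) (x (n + 1 + t))) := by
          rw [n.add_right_comm]; exact hp.le_mul_add _ _ _
      _ ≤ s * (lam ^ n * c + lam ^ n * ((2 * s) ^ t * c)) := by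
          gcongr
          · exact hx n
          · exact (ih (n + 1)).trans <|
              mul_le_mul_of_nonneg_right (pow_le_pow_of_le_one hl0 hl1 n.le_succ) (by positivity)
      _ ≤ lam ^ n * ((2 * s) ^ (t + 1) * c) := by
          have : 0 ≤ s * (lam ^ n * c) := by positivity
          rw [pow_succ]; nlinarith

theorem le_pow_mul_of_forall_le_of_mul_pow_lt_one (hp : IsPartialBMetric p s) (hl0 : 0 ≤ lam)
    {N : ℕ} (hN : s * lam ^ N < 1) {A : ℝ}
    (hshort : ∀ n, ∀ t ≤ N, p (x n) (x (n + t)) ≤ lam ^ n * A) (n t : ℕ) :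
    p (x n) (x (n + t)) ≤ lam ^ n * (s * A / (1 - s * lam ^ N)) := by
  have hs := hp.one_le
  have hgap : 0 < 1 - s * lam ^ N := by linarith
  have hA : 0 ≤ A := by simpa using (hp.nonneg _ _).trans (hshort 0 0 N.zero_le)
  have hN0 : 0 < N := Nat.pos_of_ne_zero <| by rintro rfl; simp at hN; linarith
  have hC : s * A + s * lam ^ N * (s * A / (1 - s * lam ^ N)) = s * A / (1 - s * lam ^ N) := by
    field_simp; ring
  -- `C` is the fixed point of `C ↦ s A + s λᴺ C`, which is what the induction step needs.
  set C := s * A / (1 - s * lam ^ N)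
  have hAC : A ≤ C := by
    rw [le_div_iff₀ hgap]; nlinarith [mul_nonneg hA (mul_nonneg (by linarith : 0 ≤ s) (pow_nonneg hl0 N))]
  induction t using Nat.strong_induction_on generalizing n with
  | _ t ih =>
  rcases le_or_gt t N with htN | hNt
  · exact (hshort n t htN).trans (by gcongr)
  · obtain ⟨r, rfl⟩ := Nat.exists_eq_add_of_le hNt.le
    calc p (x n) (x (n + (N + r)))
        ≤ s * (p (x n) (x (n + N)) + p (x (n + N)) (x (n + N + r))) := by
          rw [← add_assoc]; exact hp.le_mul_add _ _ _
      _ ≤ s * (lam ^ n * A + lam ^ (n + N) * C) := by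
          gcongr
          · exact hshort n N le_rfl
          · exact ih r (by omega) (n + N)
      _ = lam ^ n * C := by rw [pow_add]; linear_combination lam ^ n * hC

theorem tendsto_zero_of_le_pow_mul (hp : IsPartialBMetric p s) (hl0 : 0 ≤ lam) (hl1 : lam < 1)
    (hx : ∀ n t, p (x n) (x (n + t)) ≤ lam ^ n * c) :
    Tendsto (fun nm : ℕ × ℕ => p (x nm.1) (x nm.2)) atTop (nhds 0) := by
  have hmin : Tendsto (fun nm : ℕ × ℕ => min nm.1 nm.2) atTop atTop :=
    tendsto_atTop_atTop_of_monotone (fun _ _ h => min_le_min h.1 h.2) fun k => ⟨(k, k), by simp⟩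
  have hle : ∀ n m, p (x n) (x m) ≤ lam ^ min n m * c := by
    intro n m
    rcases le_total n m with h | h
    · obtain ⟨t, rfl⟩ := Nat.exists_eq_add_of_le h
      simpa using hx n t
    · obtain ⟨t, rfl⟩ := Nat.exists_eq_add_of_le h
      simpa [hp.symm (x (m + t))] using hx m t
  refine squeeze_zero (fun _ => hp.nonneg _ _) (fun nm => hle nm.1 nm.2) ?_
  simpa using ((tendsto_pow_atTop_nhds_zero_of_lt_one hl0 hl1).comp hmin).mul_const c

end IsPartialBMetric

theorem stmt_10_general {X : Type*} (p : X → X → ℝ) (s : ℝ)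
    (hp : IsPartialBMetric p s)
    (x : ℕ → X)
    (lam : ℝ) (hl0 : 0 ≤ lam) (hl1 : lam < 1)
    (hdec : ∀ n : ℕ, p (x (n + 1)) (x (n + 2)) ≤ lam * p (x n) (x (n + 1))) :
    Filter.Tendsto (fun nm : ℕ × ℕ => p (x nm.1) (x nm.2)) Filter.atTop (nhds 0) := by
  obtain ⟨N, hN⟩ : ∃ N : ℕ, s * lam ^ N < 1 :=
    ((tendsto_pow_atTop_nhds_zero_of_lt_one hl0 hl1).const_mul s |>.eventually
      (gt_mem_nhds (by norm_num))).exists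
  have hgeom : ∀ n, p (x n) (x (n + 1)) ≤ lam ^ n * p (x 0) (x 1) := fun n =>
    le_geom (u := fun k => p (x k) (x (k + 1))) hl0 n fun k _ => hdec k
  have hshort : ∀ n, ∀ t ≤ N, p (x n) (x (n + t)) ≤ lam ^ n * ((2 * s) ^ N * p (x 0) (x 1)) :=
    fun n t ht => (hp.le_pow_mul_two_mul_pow hl0 hl1.le hgeom n t).trans <| by
      have := hp.nonneg (x 0) (x 1)
      gcongr
      linarith [hp.one_le]
  exact hp.tendsto_zero_of_le_pow_mul hl0 hl1
    (hp.le_pow_mul_of_forall_le_of_mul_pow_lt_one hl0 hN hshort)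

theorem stmt_10 {X : Type*} (p : X → X → ℝ) (s : ℝ)
    (hp : IsPartialBMetric p s) (T : X → X)
    (x : ℕ → X) (hx : ∀ n : ℕ, x (n + 1) = T (x n))
    (lam : ℝ) (hl0 : 0 ≤ lam) (hl1 : lam < 1)
    (hdec : ∀ n : ℕ, p (x (n + 1)) (x (n + 2)) ≤ lam * p (x n) (x (n + 1))) :
    Filter.Tendsto (fun nm : ℕ × ℕ => p (x nm.1) (x nm.2)) Filter.atTop (nhds 0) :=
  stmt_10_general p s hp x lam hl0 hl1 hdec
end

section
/- Let (X,p) be a 0-complete partial b-metric space with coefficient s ≥ 1 and T satisfy the Chatterjea–Kannan condition with constants λ₁,…,λ₅ ≥ 0, λ₁ + λ₂ + 2sλ₃ + sλ₄ + sλ₅ < 1, and additionally 2sλ₁ + 2λ₃ + (s + s²)(λ₄ + λ₅) < 2. Then Picard's iteration is T-stable: if x* is the unique fixed point of T and (yₙ) is any sequence with limₙ p(yₙ₊₁, Tyₙ) = 0, then limₙ p(yₙ, x*) = 0 = p(x*,x*), i.e. yₙ converges to x* in τ(p). -/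
open Filter Topology

/-! The condition at `(x*, x*)` gives `p x* x* ≤ (l₁ + ⋯ + l₅) p x* x*`, so `p x* x* = 0`.
Averaging the condition at `(x, x*)` and at `(x*, x)` and bounding
`p x (T x) ≤ s (p x x* + p (T x) x*)` gives `s p (T x) x* ≤ κ p x x*`, where `κ < 1` is exactly
`2 s l₁ + 2 l₃ + (s + s²)(l₄ + l₅) < 2`. The triangle inequality through `T yₙ` then yields
`p yₙ₊₁ x* ≤ κ p yₙ x* + s p yₙ₊₁ (T yₙ)`, and such a perturbed contraction tends to `0` when the
perturbation does. -/

lemma tendsto_zero_of_le_mul_add {a c : ℕ → ℝ} {h : ℝ} (h0 : 0 ≤ h) (h1 : h < 1)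
    (ha : ∀ n, 0 ≤ a n) (hrec : ∀ n, a (n + 1) ≤ h * a n + c n)
    (hc : Tendsto c atTop (𝓝 0)) :
    Tendsto a atTop (𝓝 0) := by
  refine tendsto_order.2 ⟨fun e he => .of_forall fun n => he.trans_le (ha n), fun ε hε => ?_⟩
  obtain ⟨N, hN⟩ := eventually_atTop.1
    (hc.eventually (gt_mem_nhds (show (0 : ℝ) < (1 - h) * ε / 2 by nlinarith)))
  have unroll : ∀ k, a (N + k) ≤ h ^ k * a N + ε / 2 := by
    intro k
    induction k with
    | zero => simp only [add_zero, pow_zero, one_mul]; linarith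
    | succ k ih =>
      calc a (N + (k + 1)) ≤ h * a (N + k) + c (N + k) := hrec _
        _ ≤ h * (h ^ k * a N + ε / 2) + (1 - h) * ε / 2 := by
          gcongr; exact (hN _ (Nat.le_add_right _ _)).le
        _ = h ^ (k + 1) * a N + ε / 2 := by ring
  have hpow : Tendsto (fun k => h ^ k * a N) atTop (𝓝 0) := by
    simpa using (tendsto_pow_atTop_nhds_zero_of_lt_one h0 h1).mul_const (a N)
  obtain ⟨K, hK⟩ := eventually_atTop.1 (hpow.eventually (gt_mem_nhds (half_pos hε)))
  filter_upwards [eventually_ge_atTop (N + K)] with n hn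
  obtain ⟨k, rfl⟩ := Nat.exists_eq_add_of_le (le_of_add_le_left hn)
  linarith [unroll k, hK k (by omega)]

def IsChatterjeaKannan {X : Type*} (p : X → X → ℝ) (T : X → X) (l₁ l₂ l₃ l₄ l₅ : ℝ) : Prop :=
  ∀ x y, p (T x) (T y) ≤
    l₁ * p x y + l₂ * (p x (T x) * p y (T y) / (1 + p x y)) +
    l₃ * (p x (T y) * p y (T x) / (1 + p x y)) +
    l₄ * (p x (T x) * p x (T y) / (1 + p x y)) +
    l₅ * (p y (T y) * p y (T x) / (1 + p x y))

lemma mul_div_one_add_le {a b : ℝ} (ha : 0 ≤ a) (hb : 0 ≤ b) : a * b / (1 + a) ≤ b := by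
  rw [div_le_iff₀ (by linarith)]
  nlinarith

namespace IsChatterjeaKannan

variable {X : Type*} {p : X → X → ℝ} {T : X → X} {l₁ l₂ l₃ l₄ l₅ : ℝ}

lemma dist_self_eq_zero_of_fixed (hT : IsChatterjeaKannan p T l₁ l₂ l₃ l₄ l₅)
    (h₂ : 0 ≤ l₂) (h₃ : 0 ≤ l₃) (h₄ : 0 ≤ l₄) (h₅ : 0 ≤ l₅)
    (hl : l₁ + l₂ + l₃ + l₄ + l₅ < 1) {x : X} (hx : 0 ≤ p x x) (hfix : T x = x) :
    p x x = 0 := by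
  have hq : p x x * p x x / (1 + p x x) ≤ p x x := mul_div_one_add_le hx hx
  have hle : p x x ≤ (l₁ + l₂ + l₃ + l₄ + l₅) * p x x := by
    have := hT x x
    rw [hfix] at this
    nlinarith [mul_le_mul_of_nonneg_left hq (by positivity : 0 ≤ l₂ + l₃ + l₄ + l₅)]
  nlinarith

lemma dist_apply_le_avg_of_fixed (hT : IsChatterjeaKannan p T l₁ l₂ l₃ l₄ l₅)
    (h₃ : 0 ≤ l₃) (h₄ : 0 ≤ l₄) (h₅ : 0 ≤ l₅)
    (hpos : ∀ x y, 0 ≤ p x y) (hsym : ∀ x y, p x y = p y x)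
    {x₀ : X} (hfix : T x₀ = x₀) (h0 : p x₀ x₀ = 0) (x : X) :
    p (T x) x₀ ≤ l₁ * p x x₀ + l₃ * p (T x) x₀ + (l₄ + l₅) / 2 * p x (T x) := by
  have hA := hpos x x₀
  have hB := hpos (T x) x₀
  have hD := hpos x (T x)
  have e₁ : p x x₀ * p (T x) x₀ / (1 + p x x₀) ≤ p (T x) x₀ := mul_div_one_add_le hA hB
  have e₂ : p x (T x) * p x x₀ / (1 + p x x₀) ≤ p x (T x) := by
    rw [mul_comm]; exact mul_div_one_add_le hA hD
  have e₃ : p (T x) x₀ * p x x₀ / (1 + p x x₀) ≤ p (T x) x₀ := by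
    rw [mul_comm]; exact mul_div_one_add_le hA hB
  have i₁ := hT x x₀
  have i₂ := hT x₀ x
  rw [hfix, h0, hsym x₀ (T x)] at i₁ i₂
  rw [hsym x₀ x] at i₂
  simp only [mul_zero, zero_mul, zero_div, add_zero] at i₁ i₂
  nlinarith [mul_le_mul_of_nonneg_left e₁ h₃, mul_le_mul_of_nonneg_left e₂ h₄,
    mul_le_mul_of_nonneg_left e₃ h₃, mul_le_mul_of_nonneg_left e₂ h₅]

variable {s : ℝ}

lemma dist_apply_le_mul_of_fixed (hT : IsChatterjeaKannan p T l₁ l₂ l₃ l₄ l₅)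
    (hp : IsPartialBMetric p s) (h₃ : 0 ≤ l₃) (h₄ : 0 ≤ l₄) (h₅ : 0 ≤ l₅)
    {x₀ : X} (hfix : T x₀ = x₀) (h0 : p x₀ x₀ = 0) (x : X) :
    (1 - (l₃ + s * (l₄ + l₅) / 2)) * p (T x) x₀ ≤ (l₁ + s * (l₄ + l₅) / 2) * p x x₀ := by
  obtain ⟨-, hpos, -, -, hsym, htri⟩ := hp
  have hle := hT.dist_apply_le_avg_of_fixed h₃ h₄ h₅ hpos hsym hfix h0 x
  have hD : p x (T x) ≤ s * (p x x₀ + p (T x) x₀) := by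
    linarith [hsym x₀ (T x) ▸ htri x (T x) x₀, hpos x₀ x₀]
  nlinarith [mul_le_mul_of_nonneg_left hD (by positivity : 0 ≤ (l₄ + l₅) / 2)]

lemma dist_le_of_fixed (hT : IsChatterjeaKannan p T l₁ l₂ l₃ l₄ l₅)
    (hp : IsPartialBMetric p s) (h₃ : 0 ≤ l₃) (h₄ : 0 ≤ l₄) (h₅ : 0 ≤ l₅)
    (hμ : l₃ + s * (l₄ + l₅) / 2 < 1)
    {x₀ : X} (hfix : T x₀ = x₀) (h0 : p x₀ x₀ = 0) (x z : X) :
    p z x₀ ≤ s * (l₁ + s * (l₄ + l₅) / 2) / (1 - (l₃ + s * (l₄ + l₅) / 2)) * p x x₀ +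
      s * p z (T x) := by
  have hstep := hT.dist_apply_le_mul_of_fixed hp h₃ h₄ h₅ hfix h0 x
  obtain ⟨hs, hpos, -, -, -, htri⟩ := hp
  have hTx : p (T x) x₀ ≤ (l₁ + s * (l₄ + l₅) / 2) / (1 - (l₃ + s * (l₄ + l₅) / 2)) * p x x₀ := by
    rw [div_mul_eq_mul_div, le_div_iff₀ (by linarith), mul_comm]
    exact hstep
  calc p z x₀ ≤ s * (p z (T x) + p (T x) x₀) := by linarith [htri z x₀ (T x), hpos (T x) (T x)]
    _ ≤ _ := by rw [mul_div_assoc, mul_assoc]; nlinarith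

end IsChatterjeaKannan

theorem stmt_15_general {X : Type*} (p : X → X → ℝ) (s : ℝ)
    (hp : IsPartialBMetric p s) (T : X → X)
    (l₁ l₂ l₃ l₄ l₅ : ℝ)
    (h₁ : 0 ≤ l₁) (h₂ : 0 ≤ l₂) (h₃ : 0 ≤ l₃) (h₄ : 0 ≤ l₄) (h₅ : 0 ≤ l₅)
    (hsum : l₁ + l₂ + 2 * s * l₃ + s * l₄ + s * l₅ < 1)
    (hstab : 2 * s * l₁ + 2 * l₃ + (s + s ^ 2) * (l₄ + l₅) < 2)
    (hT : ∀ x y, p (T x) (T y) ≤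
      l₁ * p x y + l₂ * (p x (T x) * p y (T y) / (1 + p x y)) +
      l₃ * (p x (T y) * p y (T x) / (1 + p x y)) +
      l₄ * (p x (T x) * p x (T y) / (1 + p x y)) +
      l₅ * (p y (T y) * p y (T x) / (1 + p x y)))
    (xstar : X) (hfix : T xstar = xstar)
    (y : ℕ → X)
    (hy : Filter.Tendsto (fun n => p (y (n + 1)) (T (y n))) Filter.atTop (nhds 0)) :
    Filter.Tendsto (fun n => p (y n) xstar) Filter.atTop (nhds 0) ∧ p xstar xstar = 0 := by
  have hs : 1 ≤ s := hp.1
  have h0 : p xstar xstar = 0 :=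
    IsChatterjeaKannan.dist_self_eq_zero_of_fixed hT h₂ h₃ h₄ h₅
      (by nlinarith) (hp.2.1 _ _) hfix
  have hμ : l₃ + s * (l₄ + l₅) / 2 < 1 := by nlinarith
  have hκ : s * (l₁ + s * (l₄ + l₅) / 2) / (1 - (l₃ + s * (l₄ + l₅) / 2)) < 1 := by
    rw [div_lt_one (by linarith)]; nlinarith
  refine ⟨tendsto_zero_of_le_mul_add (by positivity) hκ (fun n => hp.2.1 _ _)
    (fun n => IsChatterjeaKannan.dist_le_of_fixed hT hp h₃ h₄ h₅ hμ hfix h0 (y n) (y (n + 1)))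
    (by simpa using hy.const_mul s), h0⟩

theorem stmt_15 {X : Type*} (p : X → X → ℝ) (s : ℝ)
    (hp : IsPartialBMetric p s) (hc : ZeroComplete p) (T : X → X)
    (l₁ l₂ l₃ l₄ l₅ : ℝ)
    (h₁ : 0 ≤ l₁) (h₂ : 0 ≤ l₂) (h₃ : 0 ≤ l₃) (h₄ : 0 ≤ l₄) (h₅ : 0 ≤ l₅)
    (hsum : l₁ + l₂ + 2 * s * l₃ + s * l₄ + s * l₅ < 1)
    (hstab : 2 * s * l₁ + 2 * l₃ + (s + s ^ 2) * (l₄ + l₅) < 2)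
    (hT : ∀ x y, p (T x) (T y) ≤
      l₁ * p x y + l₂ * (p x (T x) * p y (T y) / (1 + p x y)) +
      l₃ * (p x (T y) * p y (T x) / (1 + p x y)) +
      l₄ * (p x (T x) * p x (T y) / (1 + p x y)) +
      l₅ * (p y (T y) * p y (T x) / (1 + p x y)))
    (xstar : X) (hfix : T xstar = xstar)
    (y : ℕ → X)
    (hy : Filter.Tendsto (fun n => p (y (n + 1)) (T (y n))) Filter.atTop (nhds 0)) :
    Filter.Tendsto (fun n => p (y n) xstar) Filter.atTop (nhds 0) ∧ p xstar xstar = 0 :=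
  stmt_15_general p s hp T l₁ l₂ l₃ l₄ l₅ h₁ h₂ h₃ h₄ h₅ hsum hstab hT xstar hfix y hy
end

section
/- Let (X,p) be a partial b-metric space with coefficient s ≥ 1 and T: X → X a mapping with F(T) ≠ ∅ such that p(Tx, T²x) ≤ λ p(x, Tx) for all x ∈ X, where 0 ≤ λ < 1. Then F(T) = F(Tⁿ) for every n ∈ ℕ, n ≥ 1 (T has the P property). -/
theorem IsPartialBMetric.eq_of_eq_zero {X : Type*} {p : X → X → ℝ} {s : ℝ}
    (hp : IsPartialBMetric p s) {x y : X} (hxy : p x y = 0) : x = y := by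
  obtain ⟨-, hpos, heq, hsmall, hsym, -⟩ := hp
  have hxx : p x x = 0 := le_antisymm (hxy ▸ hsmall x y) (hpos x x)
  have hyy : p y y = 0 := le_antisymm (hxy ▸ hsym y x ▸ hsmall y x) (hpos y y)
  exact (heq x y).mpr ⟨hxx.trans hxy.symm, hxy.trans hyy.symm⟩

section Orbit

variable {X : Type*} {p : X → X → ℝ} {T : X → X} {lam : ℝ}

theorem orbit_step_le_pow_mul (hl0 : 0 ≤ lam)
    (hT : ∀ x, p (T x) (T (T x)) ≤ lam * p x (T x)) (z : X) (k : ℕ) :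
    p (T^[k] z) (T^[k + 1] z) ≤ lam ^ k * p z (T z) := by
  induction k with
  | zero => simp
  | succ k ih =>
    calc p (T^[k + 1] z) (T^[k + 1 + 1] z)
        = p (T (T^[k] z)) (T (T (T^[k] z))) := by
          simp only [Function.iterate_succ_apply']
      _ ≤ lam * p (T^[k] z) (T^[k + 1] z) := by
          simpa only [Function.iterate_succ_apply'] using hT (T^[k] z)
      _ ≤ lam * (lam ^ k * p z (T z)) := mul_le_mul_of_nonneg_left ih hl0
      _ = lam ^ (k + 1) * p z (T z) := by ring

theorem eq_zero_of_isPeriodicPt (hpos : ∀ x y, 0 ≤ p x y) (hl0 : 0 ≤ lam) (hl1 : lam < 1)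
    (hT : ∀ x, p (T x) (T (T x)) ≤ lam * p x (T x)) {n : ℕ} (hn : n ≠ 0) {z : X}
    (hz : Function.IsPeriodicPt T n z) : p z (T z) = 0 := by
  have hback := orbit_step_le_pow_mul hl0 hT z n
  rw [Function.iterate_succ_apply', hz.eq] at hback
  have hpow : lam ^ n < 1 := pow_lt_one₀ hl0 hl1 hn
  exact le_antisymm (by nlinarith [hpos z (T z)]) (hpos z (T z))

end Orbit

theorem stmt_16_general {X : Type*} (p : X → X → ℝ) (s : ℝ)
    (hp : IsPartialBMetric p s) (T : X → X)
    (lam : ℝ) (hl0 : 0 ≤ lam) (hl1 : lam < 1)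
    (hT : ∀ x : X, p (T x) (T (T x)) ≤ lam * p x (T x)) :
    ∀ n : ℕ, 1 ≤ n → ∀ z : X, (T^[n] z = z ↔ T z = z) := by
  intro n hn z
  refine ⟨fun hz => ?_, fun hz => Function.iterate_fixed hz n⟩
  have hstep : p z (T z) = 0 :=
    eq_zero_of_isPeriodicPt hp.2.1 hl0 hl1 hT (Nat.one_le_iff_ne_zero.mp hn) hz
  exact (hp.eq_of_eq_zero hstep).symm

theorem stmt_16 {X : Type*} (p : X → X → ℝ) (s : ℝ)
    (hp : IsPartialBMetric p s) (T : X → X)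
    (hne : ∃ u : X, T u = u)
    (lam : ℝ) (hl0 : 0 ≤ lam) (hl1 : lam < 1)
    (hT : ∀ x : X, p (T x) (T (T x)) ≤ lam * p x (T x)) :
    ∀ n : ℕ, 1 ≤ n → ∀ z : X, (T^[n] z = z ↔ T z = z) :=
  stmt_16_general p s hp T lam hl0 hl1 hT
end
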